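/- Let P ∈ 𝒫 and let S₁ ⊇ S₂ ⊇ … ⊇ S_k be nested subsets of corporations. Then the product (P_{S₁})^{m₁} (P_{S₂})^{m₂} ⋯ (P_{S_{k−1}})^{m_{k−1}} · (P_{S_k})^∞ equals (P_{S_k})^∞, for any positive integers m₁,…,m_{k−1}. -/

import Mathlib

open Filter Matrix Topology
open scoped Classical

/-- The matrix of shares restricted on a set `S`: rows indexed by `S` are replaced by
canonical basis (row) vectors. -/
noncomputable def restrict {ι : Type*} [DecidableEq ι] (P : Matrix ι ι ℝ) (S : Set ι) :
    Matrix ι ι ℝ :=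
  fun i j => if i ∈ S then (if j = i then (1 : ℝ) else 0) else P i j

/-- `P ∈ 𝒫`: a shares matrix with corporation set `NS`. Entries in `[0,1]`, rows sum to `1`,
rows of individuals (indices outside `NS`) are canonical basis vectors, and the powers of the
corporation-to-corporation block `Q` tend to `0`. -/
def IsShares {ι : Type*} [Fintype ι] [DecidableEq ι]
    (NS : Set ι) (P : Matrix ι ι ℝ) : Prop :=
  (∀ i j, 0 ≤ P i j ∧ P i j ≤ 1) ∧
  (∀ i, ∑ j, P i j = 1) ∧
  (∀ i ∉ NS, ∀ j, P i j = if j = i then (1 : ℝ) else 0) ∧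
  Tendsto (fun n => (Matrix.of fun i j : NS => P i j) ^ n) atTop
    (𝓝 (0 : Matrix NS NS ℝ))

/-! Every limit of powers `A ^ n → L` is fixed by `A`, so `P_{S_k} P^∞ = P^∞`. A row of `P_{S_i}`
is either a basis vector (when it lies in `S_i`), which fixes the matching row of `P^∞`, or the
same row as in `P_{S_k}` (since `S_k ⊆ S_i`). Hence every `P_{S_i}` lies in the stabilizer monoid
of `P^∞`, and so does any product of their powers. -/

theorem mul_eq_of_tendsto_pow {M : Type*} [Monoid M] [TopologicalSpace M] [ContinuousMul M]
    [T2Space M] {A L : M} (h : Tendsto (fun n ↦ A ^ n) atTop (𝓝 L)) : A * L = L :=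
  tendsto_nhds_unique ((h.const_mul A).congr fun n ↦ (pow_succ' A n).symm)
    ((tendsto_add_atTop_iff_nat 1).2 h)

theorem restrict_mul_eq_of_subset {ι : Type*} [Fintype ι] [DecidableEq ι]
    {P L : Matrix ι ι ℝ} {S T : Set ι} (hTS : T ⊆ S) (h : restrict P T * L = L) :
    restrict P S * L = L := by
  ext a b
  by_cases ha : a ∈ S
  · simp [restrict, mul_apply, ha]
  · have haT : a ∉ T := fun haT ↦ ha (hTS haT)
    have hrow : restrict P S a = restrict P T a := funext fun j ↦ by simp [restrict, ha, haT]
    rw [mul_apply, hrow, ← mul_apply, h]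

theorem nested_restrict_pow_mul_limit_general {ι : Type*} [Fintype ι] [DecidableEq ι]
    (P : Matrix ι ι ℝ)
    (k : ℕ) (S : Fin (k + 1) → Set ι)
    (hnest : ∀ i j : Fin (k + 1), i ≤ j → S j ⊆ S i)
    (m : Fin k → ℕ)
    (Pinf : Matrix ι ι ℝ)
    (hPinf : Tendsto (fun n => (restrict P (S (Fin.last k))) ^ n) atTop (𝓝 Pinf)) :
    (List.ofFn fun i : Fin k => (restrict P (S i.castSucc)) ^ (m i)).prod * Pinf = Pinf := by
  have hfix : restrict P (S (Fin.last k)) * Pinf = Pinf := mul_eq_of_tendsto_pow hPinf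
  have hstab (i : Fin k) :
      restrict P (S i.castSucc) ∈ MulAction.stabilizerSubmonoid (Matrix ι ι ℝ) Pinf :=
    restrict_mul_eq_of_subset (hnest _ _ (Fin.le_last _)) hfix
  exact MulAction.mem_stabilizerSubmonoid_iff.1 <|
    Submonoid.list_prod_mem _ <| List.forall_mem_ofFn_iff.2 fun i ↦ pow_mem (hstab i) _

/-- for nested subsets of corporations `S 0 ⊇ S 1 ⊇ … ⊇ S k` and positive
exponents `m i`, the ordered product
`(P_{S 0})^{m 0} ⋯ (P_{S (k-1)})^{m (k-1)} * (P_{S k})^∞` equals `(P_{S k})^∞`. -/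
theorem nested_restrict_pow_mul_limit {ι : Type*} [Fintype ι] [DecidableEq ι]
    (NS : Set ι) (P : Matrix ι ι ℝ) (hP : IsShares NS P)
    (k : ℕ) (S : Fin (k + 1) → Set ι)
    (hsub : ∀ i, S i ⊆ NS)
    (hnest : ∀ i j : Fin (k + 1), i ≤ j → S j ⊆ S i)
    (m : Fin k → ℕ) (hm : ∀ i, 0 < m i)
    (Pinf : Matrix ι ι ℝ)
    (hPinf : Tendsto (fun n => (restrict P (S (Fin.last k))) ^ n) atTop (𝓝 Pinf)) :
    (List.ofFn fun i : Fin k => (restrict P (S i.castSucc)) ^ (m i)).prod * Pinf = Pinf :=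
  nested_restrict_pow_mul_limit_general P k S hnest m Pinf hPinf
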